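/- arXiv:2409.20402 — 2 statements merged into one kernel-verified Lean document; each statement's English description precedes it below -/
import Mathlib

section
/- The real Jacobian determinant of the Cayley transform Φ at a point ξ of the unit ball equals 4 / |1 + ξ_n|^{2(n+1)}, and the real Jacobian of Φ^{-1} at z ∈ U equals 1 / (4 |ρ(z,𝐢)|^{2(n+1)}). -/
open Complex MeasureTheory Filter ComplexConjugate

noncomputable section

abbrev Cm (m : ℕ) := Fin m → ℂ

/-- squared Euclidean norm of `z' ∈ ℂ^{n-1}` -/
def nsq {m : ℕ} (a : Cm m) : ℝ := ∑ j, Complex.normSq (a j)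

/-- defining function `ρ(z) = Im z_n - |z'|²` of the Siegel upper half-space -/
def rho {m : ℕ} (z : Cm m × ℂ) : ℝ := z.2.im - nsq z.1

/-- `ρ(z,w) = (i/2)(conj w_n - z_n) - z'·conj w'` -/
def rho2 {m : ℕ} (z w : Cm m × ℂ) : ℂ :=
  (I / 2) * (conj w.2 - z.2) - ∑ j, z.1 j * conj (w.1 j)

/-- the Siegel upper half-space `U` -/
def Siegel (m : ℕ) : Set (Cm m × ℂ) := {z | 0 < rho z}

/-- the point `𝐢 = (0', i)` -/
def iPt (m : ℕ) : Cm m × ℂ := (0, I)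

/-- Euclidean norm of a point of ℂⁿ = ℂ^{n-1} × ℂ -/
def normz {m : ℕ} (z : Cm m × ℂ) : ℝ := Real.sqrt (nsq z.1 + Complex.normSq z.2)

/-- the open unit ball of ℂⁿ = ℂ^{n-1} × ℂ -/
def Ball (m : ℕ) : Set (Cm m × ℂ) := {ξ | nsq ξ.1 + Complex.normSq ξ.2 < 1}

/-- the Cayley transform Φ -/
def Phi {m : ℕ} (ξ : Cm m × ℂ) : Cm m × ℂ :=
  (fun j => ξ.1 j / (1 + ξ.2), I * (1 - ξ.2) / (1 + ξ.2))

/-- the inverse Cayley transform Φ⁻¹ -/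
def Psi {m : ℕ} (z : Cm m × ℂ) : Cm m × ℂ :=
  (fun j => 2 * I * z.1 j / (I + z.2), (I - z.2) / (I + z.2))

/-! Both Φ and Φ⁻¹ are linear-fractional maps `(z', z_n) ↦ (α z', γ + δ z_n) / (β + z_n)`.
Their complex derivative is block upper triangular, with `α / (β + z_n)` repeated on the `z'`
block and `(βδ - γ) / (β + z_n)²` in the corner, and the real Jacobian of a holomorphic map is the
squared modulus of its complex Jacobian. For Φ and Φ⁻¹ one has `|βδ - γ| = 2`. -/

theorem LinearMap.det_eq_pow_mul_of_apply_prod {K ι : Type*} [CommRing K] [Fintype ι]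
    [DecidableEq ι] (T : (ι → K) × K →ₗ[K] (ι → K) × K) (c d : K) (b : ι → K)
    (hT : ∀ v w, T (v, w) = (c • v + w • b, d * w)) :
    LinearMap.det T = c ^ Fintype.card ι * d := by
  let e := (Pi.basisFun K ι).prod (Module.Basis.singleton Unit K)
  rw [← LinearMap.det_toMatrix e, ← Matrix.fromBlocks_toBlocks (LinearMap.toMatrix e e T)]
  have h₁₁ : (LinearMap.toMatrix e e T).toBlocks₁₁ = c • 1 := by
    ext i j
    simp [e, Matrix.toBlocks₁₁, LinearMap.toMatrix_apply, hT, Matrix.one_apply, Pi.single_apply]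
  have h₂₁ : (LinearMap.toMatrix e e T).toBlocks₂₁ = 0 := by
    ext i j
    simp [e, Matrix.toBlocks₂₁, LinearMap.toMatrix_apply, hT]
  have h₂₂ : (LinearMap.toMatrix e e T).toBlocks₂₂ = Matrix.of fun _ _ => d := by
    ext i j
    simp [e, Matrix.toBlocks₂₂, LinearMap.toMatrix_apply, hT]
  rw [h₁₁, h₂₁, h₂₂, Matrix.det_fromBlocks_zero₂₁, Matrix.det_smul, Matrix.det_one,
    Matrix.det_unique]
  simp

section LinFrac

variable {ι : Type*} [Fintype ι]

def linFrac (α β γ δ : ℂ) (z : (ι → ℂ) × ℂ) : (ι → ℂ) × ℂ :=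
  (β + z.2)⁻¹ • (α • z.1, γ + δ * z.2)

variable (α β γ δ : ℂ) {z : (ι → ℂ) × ℂ}

theorem differentiableAt_linFrac (hz : β + z.2 ≠ 0) :
    DifferentiableAt ℂ (linFrac α β γ δ) z := by
  unfold linFrac
  fun_prop (disch := exact hz)

theorem fderiv_linFrac_apply (hz : β + z.2 ≠ 0) (v : ι → ℂ) (w : ℂ) :
    fderiv ℂ (linFrac α β γ δ) z (v, w) =
      ((α / (β + z.2)) • v + w • (-(α / (β + z.2) ^ 2)) • z.1,
        (β * δ - γ) / (β + z.2) ^ 2 * w) := by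
  have hden : HasFDerivAt (fun u : (ι → ℂ) × ℂ => (β + u.2)⁻¹)
      (-((β + z.2) ^ 2)⁻¹ • ContinuousLinearMap.snd ℂ (ι → ℂ) ℂ) z :=
    (hasDerivAt_inv hz).comp_hasFDerivAt z (hasFDerivAt_snd.const_add β)
  have hnum := (hasFDerivAt_fst (p := z).const_smul α).prodMk
    ((HasFDerivAt.const_mul (𝕜 := ℂ) hasFDerivAt_snd δ).const_add γ)
  have hf : HasFDerivAt (linFrac α β γ δ) _ z := hden.smul hnum
  rw [hf.fderiv]
  ext j
  · simp [div_eq_mul_inv]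
    ring
  · simp
    field_simp
    ring

theorem det_fderiv_linFrac [DecidableEq ι] (hz : β + z.2 ≠ 0) :
    LinearMap.det (fderiv ℝ (linFrac α β γ δ) z : ((ι → ℂ) × ℂ) →ₗ[ℝ] (ι → ℂ) × ℂ) =
      ‖α‖ ^ (2 * Fintype.card ι) * ‖β * δ - γ‖ ^ 2 / ‖β + z.2‖ ^ (2 * (Fintype.card ι + 2)) := by
  rw [(differentiableAt_linFrac α β γ δ hz).fderiv_restrictScalars ℝ,
    ContinuousLinearMap.coe_restrictScalars, LinearMap.det_restrictScalars,
    LinearMap.det_eq_pow_mul_of_apply_prod _ _ _ _ (fderiv_linFrac_apply α β γ δ hz),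
    Algebra.norm_complex_apply, normSq_eq_norm_sq]
  simp only [norm_mul, norm_pow, norm_div]
  ring

end LinFrac

theorem Phi_eq_linFrac (m : ℕ) : Phi (m := m) = linFrac 1 1 I (-I) := by
  funext ξ
  ext j <;> simp [Phi, linFrac] <;> ring

theorem Psi_eq_linFrac (m : ℕ) : Psi (m := m) = linFrac (2 * I) I I (-1) := by
  funext z
  ext j <;> simp [Psi, linFrac] <;> ring

theorem nsq_nonneg {m : ℕ} (a : Cm m) : 0 ≤ nsq a :=
  Finset.sum_nonneg fun _ _ => normSq_nonneg _

theorem one_add_ne_zero_of_mem_Ball {m : ℕ} {ξ : Cm m × ℂ} (hξ : ξ ∈ Ball m) : 1 + ξ.2 ≠ 0 := by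
  intro h
  have hlt : nsq ξ.1 + normSq ξ.2 < 1 := hξ
  rw [show ξ.2 = -1 by linear_combination h, normSq_neg, normSq_one] at hlt
  linarith [nsq_nonneg ξ.1]

theorem I_add_ne_zero_of_mem_Siegel {m : ℕ} {z : Cm m × ℂ} (hz : z ∈ Siegel m) : I + z.2 ≠ 0 := by
  intro h
  have hpos : 0 < z.2.im - nsq z.1 := hz
  rw [show z.2 = -I by linear_combination h, neg_im, I_im] at hpos
  linarith [nsq_nonneg z.1]

theorem norm_rho2_iPt {m : ℕ} (z : Cm m × ℂ) : ‖rho2 z (iPt m)‖ = ‖I + z.2‖ / 2 := by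
  have h : rho2 z (iPt m) = -(I / 2) * (I + z.2) := by
    simp [rho2, iPt]
    ring
  simp [h, div_eq_inv_mul]

/-- Here `n = m + 1`, so `2(n+1) = 2(m+2)`. -/
theorem stmt6 (m : ℕ) :
    (∀ ξ ∈ Ball m,
      LinearMap.det ((fderiv ℝ (Phi (m := m)) ξ : (Cm m × ℂ) →L[ℝ] (Cm m × ℂ)) :
          (Cm m × ℂ) →ₗ[ℝ] (Cm m × ℂ)) = 4 / ‖(1 : ℂ) + ξ.2‖ ^ (2 * (m + 2))) ∧
    (∀ z ∈ Siegel m,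
      LinearMap.det ((fderiv ℝ (Psi (m := m)) z : (Cm m × ℂ) →L[ℝ] (Cm m × ℂ)) :
          (Cm m × ℂ) →ₗ[ℝ] (Cm m × ℂ)) = 1 / (4 * ‖rho2 z (iPt m)‖ ^ (2 * (m + 2)))) := by
  refine ⟨fun ξ hξ => ?_, fun z hz => ?_⟩
  · rw [Phi_eq_linFrac, det_fderiv_linFrac _ _ _ _ (one_add_ne_zero_of_mem_Ball hξ),
      show 1 * -I - I = -(2 * I) by ring]
    norm_num
  · rw [Psi_eq_linFrac, det_fderiv_linFrac _ _ _ _ (I_add_ne_zero_of_mem_Siegel hz),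
      show I * -1 - I = -(2 * I) by ring, norm_rho2_iPt]
    norm_num [div_pow]
    ring
end
end

section
/- Let λ > -1 and α ∈ ℕ_0^n a multi-index. Define L_j = ∂_j + 2i\bar{z}_j ∂_n for 1 ≤ j ≤ n-1 and L_n = ∂_n, and L^α = L_1^{α_1}⋯L_n^{α_n}. Then applying L^α in the variable z to the Bergman kernel ρ(z,w)^{-(n+1+λ)} gives C(n,λ,α) (\bar{z'} - \bar{w'})^{α'} ρ(z,w)^{-(n+1+λ+|α|)} for some constant C(n,λ,α) depending only on n, λ, α. -/
open Complex MeasureTheory Filter ComplexConjugate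

noncomputable section

/-- Wirtinger derivative ∂_j (in a slice direction of ℂ^{n-1}),
`∂_j = ½(∂_{x_j} - i ∂_{y_j})`, via real line derivatives. -/
def Dj {m : ℕ} (j : Fin m) (g : Cm m × ℂ → ℂ) (z : Cm m × ℂ) : ℂ :=
  (1 / 2) * (lineDeriv ℝ g z (Pi.single j 1, 0) - I * lineDeriv ℝ g z (Pi.single j I, 0))

/-- Wirtinger derivative ∂ₙ in the last variable. -/
def Dn {m : ℕ} (g : Cm m × ℂ → ℂ) (z : Cm m × ℂ) : ℂ :=
  (1 / 2) * (lineDeriv ℝ g z (0, 1) - I * lineDeriv ℝ g z (0, I))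

/-- the operator `L_j = ∂_j + 2i conj(z_j) ∂ₙ` -/
def Lop {m : ℕ} (j : Fin m) (g : Cm m × ℂ → ℂ) : Cm m × ℂ → ℂ :=
  fun z => Dj j g z + 2 * I * conj (z.1 j) * Dn g z

/-- the iterated operator `L^α = L_1^{α_1} ⋯ L_{n-1}^{α_{n-1}} Lₙ^{αₙ}` -/
def Lpow {m : ℕ} (a : Fin m → ℕ) (an : ℕ) : (Cm m × ℂ → ℂ) → (Cm m × ℂ → ℂ) :=
  ((List.ofFn fun j : Fin m => (Lop j)^[a j]).foldr (· ∘ ·) id) ∘ (Dn (m := m))^[an]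

/-!
Write `δⱼ = conj zⱼ - conj wⱼ`. Since `Re ρ(z,w) = (ρ(z) + ρ(w))/2 + |z' - w'|²/2 > 0` on
`U × U`, the principal power `ρ(z,w)^s` is smooth there, and the functions `C δ^b ρ(z,w)^s`
form a family that each `Lⱼ` and `∂ₙ` maps into itself. The factor `δ^b` is antiholomorphic
and independent of `zₙ`, so `∂ⱼ` and `∂ₙ` only differentiate `ρ(z,w)^s`, which is holomorphic
in `z` with `∂ⱼρ = -conj wⱼ` and `∂ₙρ = -i/2`. Hence `∂ₙ` multiplies by `-(i/2) s ρ⁻¹` and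
`Lⱼ = ∂ⱼ + 2i conj zⱼ ∂ₙ` multiplies by `s δⱼ ρ⁻¹`. The new constant depends only on
`(C, b, s)`, so iterating gives the claim.
-/

open Topology

theorem HasLineDerivAt.mul {𝕜 E 𝔸 : Type*} [NontriviallyNormedField 𝕜] [NormedAddCommGroup E]
    [NormedSpace 𝕜 E] [NormedCommRing 𝔸] [NormedAlgebra 𝕜 𝔸] {f g : E → 𝔸} {f' g' : 𝔸}
    {x v : E} (hf : HasLineDerivAt 𝕜 f f' x v) (hg : HasLineDerivAt 𝕜 g g' x v) :
    HasLineDerivAt 𝕜 (fun y => f y * g y) (f' * g x + f x * g') x v := by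
  simpa only [HasLineDerivAt, zero_smul, add_zero] using HasDerivAt.fun_mul hf hg

lemma hasDerivAt_const_add_ofReal_mul (A B : ℂ) : HasDerivAt (fun t : ℝ => A + t * B) B 0 := by
  simpa using ((hasDerivAt_id (0 : ℝ)).ofReal_comp.mul_const B).const_add A

section

variable {m : ℕ}

lemma continuous_rho : Continuous (rho (m := m)) := by
  unfold rho nsq
  fun_prop

lemma isOpen_Siegel : IsOpen (Siegel m) :=
  isOpen_lt continuous_const continuous_rho

lemma re_rho2 (z w : Cm m × ℂ) : (rho2 z w).re = (rho z + rho w) / 2 + nsq (z.1 - w.1) / 2 := by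
  simp only [rho2, rho, nsq, Complex.sub_re, Complex.mul_re, Complex.re_sum, Pi.sub_apply,
    Complex.normSq_sub, Finset.sum_add_distrib, Finset.sum_sub_distrib, div_ofNat_re, I_re,
    zero_div, conj_re, zero_mul, div_ofNat_im, I_im, one_div, sub_im, conj_im, zero_sub, mul_neg,
    sub_neg_eq_add]
  rw [← Finset.mul_sum, Finset.sum_add_distrib]
  ring

lemma rho2_mem_slitPlane {z w : Cm m × ℂ} (hz : z ∈ Siegel m) (hw : w ∈ Siegel m) :
    rho2 z w ∈ slitPlane := by
  have : 0 ≤ nsq (z.1 - w.1) := Finset.sum_nonneg fun j _ => Complex.normSq_nonneg _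
  refine mem_slitPlane_iff.2 (Or.inl ?_)
  rw [re_rho2]
  linarith [show 0 < rho z from hz, show 0 < rho w from hw]

lemma rho2_add_smul (z w v : Cm m × ℂ) (t : ℝ) :
    rho2 (z + t • v) w = rho2 z w + t * (-(I / 2) * v.2 - ∑ j, v.1 j * conj (w.1 j)) := by
  simp only [rho2, Prod.fst_add, Prod.snd_add, Prod.smul_fst, Prod.smul_snd, Pi.add_apply,
    Pi.smul_apply, Complex.real_smul, add_mul, Finset.sum_add_distrib]
  simp_rw [mul_assoc (t : ℂ), ← Finset.mul_sum]
  ring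

lemma hasLineDerivAt_rho2_cpow {z w : Cm m × ℂ} (hz : rho2 z w ∈ slitPlane) (s : ℂ)
    (v : Cm m × ℂ) :
    HasLineDerivAt ℝ (fun z => rho2 z w ^ s)
      (s * rho2 z w ^ (s - 1) * (-(I / 2) * v.2 - ∑ j, v.1 j * conj (w.1 j))) z v := by
  set L := -(I / 2) * v.2 - ∑ j, v.1 j * conj (w.1 j)
  have hpow : HasDerivAt (fun y : ℂ => y ^ s) (s * rho2 z w ^ (s - 1))
      (rho2 z w + ((0 : ℝ) : ℂ) * L) := by
    simpa using (hasStrictDerivAt_cpow_const hz).hasDerivAt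
  unfold HasLineDerivAt
  simp_rw [rho2_add_smul]
  exact hpow.comp 0 (hasDerivAt_const_add_ofReal_mul _ _)

def conjMonomial (w : Cm m × ℂ) (b : Fin m → ℕ) (z : Cm m × ℂ) : ℂ :=
  ∏ j, (conj (z.1 j) - conj (w.1 j)) ^ b j

-- The derivative is conjugate-linear in the direction: this is why `∂ⱼ` annihilates `δ^b`.
lemma exists_hasLineDerivAt_conjMonomial (w z : Cm m × ℂ) (b : Fin m → ℕ) :
    ∃ X : Fin m → ℂ, ∀ v : Cm m × ℂ,
      HasLineDerivAt ℝ (conjMonomial w b) (∑ j, X j * conj (v.1 j)) z v := by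
  classical
  set δ : Fin m → ℂ := fun j => conj (z.1 j) - conj (w.1 j)
  refine ⟨fun j => (∏ i ∈ Finset.univ.erase j, δ i ^ b i) * (b j * δ j ^ (b j - 1)), fun v => ?_⟩
  have hfactor (j : Fin m) : HasDerivAt (fun t : ℝ => (δ j + t * conj (v.1 j)) ^ b j)
      (b j * δ j ^ (b j - 1) * conj (v.1 j)) 0 := by
    simpa using (hasDerivAt_const_add_ofReal_mul (δ j) (conj (v.1 j))).fun_pow (b j)
  have hline : (fun t : ℝ => conjMonomial w b (z + t • v)) =
      fun t : ℝ => ∏ j, (δ j + t * conj (v.1 j)) ^ b j := by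
    funext t
    simp only [conjMonomial, δ, Prod.fst_add, Prod.smul_fst, Pi.add_apply, Pi.smul_apply,
      Complex.real_smul, map_add, map_mul, Complex.conj_ofReal]
    exact Finset.prod_congr rfl fun j _ => by ring
  rw [HasLineDerivAt, hline]
  refine (HasDerivAt.fun_finsetProd (u := Finset.univ) fun j _ => hfactor j).congr_deriv
    (Finset.sum_congr rfl fun j _ => ?_)
  simp [mul_assoc]

lemma conjMonomial_add_single (w z : Cm m × ℂ) (b : Fin m → ℕ) (j : Fin m) :
    conjMonomial w (b + Pi.single j 1) z = (conj (z.1 j) - conj (w.1 j)) * conjMonomial w b z := by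
  simp only [conjMonomial, Pi.add_apply, pow_add, Finset.prod_mul_distrib]
  rw [mul_comm, Fintype.prod_eq_single j fun i hi => by simp [hi]]
  simp

def kernelMonomial (w : Cm m × ℂ) (C : ℂ) (b : Fin m → ℕ) (s : ℂ) (z : Cm m × ℂ) : ℂ :=
  C * (conjMonomial w b z * rho2 z w ^ s)

lemma exists_hasLineDerivAt_kernelMonomial {z w : Cm m × ℂ} (hz : rho2 z w ∈ slitPlane)
    (C : ℂ) (b : Fin m → ℕ) (s : ℂ) :
    ∃ X : Fin m → ℂ, ∀ v : Cm m × ℂ, HasLineDerivAt ℝ (kernelMonomial w C b s)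
      (C * ((∑ j, X j * conj (v.1 j)) * rho2 z w ^ s + conjMonomial w b z *
        (s * rho2 z w ^ (s - 1) * (-(I / 2) * v.2 - ∑ j, v.1 j * conj (w.1 j))))) z v := by
  obtain ⟨X, hX⟩ := exists_hasLineDerivAt_conjMonomial w z b
  exact ⟨X, fun v => ((hX v).mul (hasLineDerivAt_rho2_cpow hz s v)).const_mul C⟩

lemma Dn_kernelMonomial {z w : Cm m × ℂ} (hz : rho2 z w ∈ slitPlane) (C : ℂ) (b : Fin m → ℕ)
    (s : ℂ) : Dn (kernelMonomial w C b s) z = kernelMonomial w (-(I / 2) * s * C) b (s - 1) z := by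
  obtain ⟨X, hX⟩ := exists_hasLineDerivAt_kernelMonomial hz C b s
  rw [Dn, (hX (0, 1)).lineDeriv, (hX (0, I)).lineDeriv]
  simp only [kernelMonomial, Pi.zero_apply, map_zero, mul_zero, zero_mul, Finset.sum_const_zero,
    zero_add, sub_zero]
  linear_combination (C * conjMonomial w b z * s * rho2 z w ^ (s - 1) * I / 4) * I_mul_I

lemma Dj_kernelMonomial {z w : Cm m × ℂ} (hz : rho2 z w ∈ slitPlane) (C : ℂ) (b : Fin m → ℕ)
    (s : ℂ) (j : Fin m) :
    Dj j (kernelMonomial w C b s) z = kernelMonomial w (-conj (w.1 j) * s * C) b (s - 1) z := by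
  classical
  obtain ⟨X, hX⟩ := exists_hasLineDerivAt_kernelMonomial hz C b s
  rw [Dj, (hX (Pi.single j 1, 0)).lineDeriv, (hX (Pi.single j I, 0)).lineDeriv]
  simp only [kernelMonomial, Pi.single_apply, apply_ite, ite_mul, zero_mul, mul_zero, map_zero,
    Finset.sum_ite_eq', Finset.mem_univ, if_true, conj_I, map_one]
  linear_combination (C * X j * rho2 z w ^ s / 2 +
    C * conjMonomial w b z * s * rho2 z w ^ (s - 1) * conj (w.1 j) / 2) * I_mul_I

lemma Lop_kernelMonomial {z w : Cm m × ℂ} (hz : rho2 z w ∈ slitPlane) (C : ℂ)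
    (b : Fin m → ℕ) (s : ℂ) (j : Fin m) :
    Lop j (kernelMonomial w C b s) z = kernelMonomial w (s * C) (b + Pi.single j 1) (s - 1) z := by
  rw [Lop, Dj_kernelMonomial hz, Dn_kernelMonomial hz]
  simp only [kernelMonomial, conjMonomial_add_single]
  linear_combination (-(conj (z.1 j)) * s * C * conjMonomial w b z * rho2 z w ^ (s - 1)) * I_mul_I

lemma Filter.EventuallyEq.Dn_eq {f g : Cm m × ℂ → ℂ} {z : Cm m × ℂ}
    (h : g =ᶠ[𝓝 z] f) : Dn g z = Dn f z := by
  simp only [Dn, h.lineDeriv_eq]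

lemma Filter.EventuallyEq.Lop_eq {f g : Cm m × ℂ → ℂ} {z : Cm m × ℂ}
    (h : g =ᶠ[𝓝 z] f) (j : Fin m) : Lop j g z = Lop j f z := by
  simp only [Lop, Dj, h.lineDeriv_eq, h.Dn_eq]

-- `C'` is chosen before `w`, which makes the constant of the theorem independent of `w`.
def ShiftsKernelMonomials (T : (Cm m × ℂ → ℂ) → (Cm m × ℂ → ℂ)) (d : Fin m → ℕ) (k : ℕ) :
    Prop :=
  ∀ (C : ℂ) (b : Fin m → ℕ) (s : ℂ), ∃ C' : ℂ, ∀ w ∈ Siegel m, ∀ g : Cm m × ℂ → ℂ,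
    Set.EqOn g (kernelMonomial w C b s) (Siegel m) →
      Set.EqOn (T g) (kernelMonomial w C' (b + d) (s - k)) (Siegel m)

namespace ShiftsKernelMonomials

variable {T T₁ T₂ : (Cm m × ℂ → ℂ) → (Cm m × ℂ → ℂ)} {d d₁ d₂ : Fin m → ℕ} {k k₁ k₂ : ℕ}

lemma id : ShiftsKernelMonomials (m := m) id 0 0 :=
  fun C _ _ => ⟨C, fun _ _ _ hg => by simpa using hg⟩

lemma comp (h₁ : ShiftsKernelMonomials T₁ d₁ k₁) (h₂ : ShiftsKernelMonomials T₂ d₂ k₂) :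
    ShiftsKernelMonomials (T₁ ∘ T₂) (d₁ + d₂) (k₁ + k₂) := by
  intro C b s
  obtain ⟨C₂, hC₂⟩ := h₂ C b s
  obtain ⟨C₁, hC₁⟩ := h₁ C₂ (b + d₂) (s - k₂)
  refine ⟨C₁, fun w hw g hg => ?_⟩
  have h := hC₁ w hw (T₂ g) (hC₂ w hw g hg)
  rwa [add_assoc, add_comm d₂, sub_sub, add_comm (k₂ : ℂ), ← Nat.cast_add] at h

lemma iterate (h : ShiftsKernelMonomials T d k) (n : ℕ) :
    ShiftsKernelMonomials T^[n] (n • d) (n * k) := by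
  induction n with
  | zero => simpa using ShiftsKernelMonomials.id
  | succ n ih =>
    rw [Function.iterate_succ', succ_nsmul', Nat.succ_mul, add_comm (n * k)]
    exact h.comp ih

lemma foldr_ofFn {n : ℕ} {T : Fin n → (Cm m × ℂ → ℂ) → (Cm m × ℂ → ℂ)} {d : Fin n → Fin m → ℕ}
    {k : Fin n → ℕ} (h : ∀ i, ShiftsKernelMonomials (T i) (d i) (k i)) :
    ShiftsKernelMonomials ((List.ofFn T).foldr (· ∘ ·) _root_.id) (∑ i, d i) (∑ i, k i) := by
  induction n with
  | zero => simpa using ShiftsKernelMonomials.id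
  | succ n ih =>
    rw [List.ofFn_succ, List.foldr_cons, Fin.sum_univ_succ, Fin.sum_univ_succ]
    exact (h 0).comp (ih fun i => h i.succ)

end ShiftsKernelMonomials

lemma shiftsKernelMonomials_Dn : ShiftsKernelMonomials (m := m) Dn 0 1 := by
  intro C b s
  refine ⟨-(I / 2) * s * C, fun w hw g hg z hz => ?_⟩
  rw [(hg.eventuallyEq_of_mem (isOpen_Siegel.mem_nhds hz)).Dn_eq,
    Dn_kernelMonomial (rho2_mem_slitPlane hz hw)]
  simp

lemma shiftsKernelMonomials_Lop (j : Fin m) :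
    ShiftsKernelMonomials (Lop j) (Pi.single j 1) 1 := by
  intro C b s
  refine ⟨s * C, fun w hw g hg z hz => ?_⟩
  rw [(hg.eventuallyEq_of_mem (isOpen_Siegel.mem_nhds hz)).Lop_eq,
    Lop_kernelMonomial (rho2_mem_slitPlane hz hw)]
  simp

end

theorem stmt18_general (m : ℕ) (lam : ℝ) (a : Fin m → ℕ) (an : ℕ) :
    ∃ C : ℂ, ∀ w ∈ Siegel m, ∀ z ∈ Siegel m,
      Lpow a an (fun z => rho2 z w ^ (-(((m : ℝ) + 2 + lam : ℝ) : ℂ))) z =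
        C * (∏ j, (conj (z.1 j) - conj (w.1 j)) ^ (a j)) *
          rho2 z w ^ (-(((m : ℝ) + 2 + lam + (∑ j, a j : ℕ) + (an : ℝ) : ℝ) : ℂ)) := by
  have hLpow : ShiftsKernelMonomials (Lpow a an) a (∑ j, a j + an) := by
    have h := (ShiftsKernelMonomials.foldr_ofFn fun j =>
      (shiftsKernelMonomials_Lop j).iterate (a j)).comp (shiftsKernelMonomials_Dn.iterate an)
    simp only [smul_zero, add_zero, mul_one, ← Pi.single_smul', smul_eq_mul,
      Finset.univ_sum_single] at h
    exact h
  obtain ⟨C, hC⟩ := hLpow 1 0 (-(((m : ℝ) + 2 + lam : ℝ) : ℂ))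
  refine ⟨C, fun w hw z hz => ?_⟩
  rw [hC w hw _ (fun z _ => by simp [kernelMonomial, conjMonomial]) hz, kernelMonomial,
    conjMonomial, zero_add, mul_assoc]
  congr 3
  push_cast
  ring

/-- `L^α` applied to the Bergman kernel `ρ(z,w)^{-(n+1+λ)}`
produces `C(n,λ,α) (conj z' - conj w')^{α'} ρ(z,w)^{-(n+1+λ+|α|)}`
(here n = m+1, |α| = Σ_j α_j + αₙ). -/
theorem stmt18 (m : ℕ) (lam : ℝ) (hlam : -1 < lam) (a : Fin m → ℕ) (an : ℕ) :
    ∃ C : ℂ, ∀ w ∈ Siegel m, ∀ z ∈ Siegel m,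
      Lpow a an (fun z => rho2 z w ^ (-(((m : ℝ) + 2 + lam : ℝ) : ℂ))) z =
        C * (∏ j, (conj (z.1 j) - conj (w.1 j)) ^ (a j)) *
          rho2 z w ^ (-(((m : ℝ) + 2 + lam + (∑ j, a j : ℕ) + (an : ℝ) : ℝ) : ℂ)) :=
  stmt18_general m lam a an
end
end
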